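/- arXiv:2602.21888 — 2 statements merged into one kernel-verified Lean document; each statement's English description precedes it below -/
import Mathlib

section
/- Let (X, μ) be a measure space and F₁, …, F_N ∈ L²(X) with N ≥ 2. Suppose there exists B ≥ 0 such that for every choice of signs ε₁, …, ε_N ∈ {-1, 0, 1} one has ‖∑_{i=1}^N ε_i F_i‖_{L²} ≤ B. Then the 2-variation of the partial sums satisfies ‖V₂(∑_{i=1}^n F_i : 1 ≤ n ≤ N)‖_{L²} ≤ C (log N) B for an absolute constant C. -/
open MeasureTheory Finset

/-- The 2-variation of a finite sequence `G : Fin N → ℝ`: supremum over all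
increasing subsequences of the ℓ² sum of consecutive differences. -/
noncomputable def var2Fin (N : ℕ) (G : Fin N → ℝ) : ENNReal :=
  ⨆ (k : ℕ) (t : Fin (k + 1) → Fin N) (_ : StrictMono t),
    (∑ i : Fin k, (ENNReal.ofReal |G (t i.succ) - G (t i.castSucc)|) ^ 2) ^ ((1 : ℝ) / 2)

open scoped ENNReal NNReal

section Auxiliary


/-- The dyadic block at level `j` and position `m`. -/
def dblock (p : ℕ × ℕ) : Finset ℕ := Finset.Ico (p.2 * 2 ^ p.1) ((p.2 + 1) * 2 ^ p.1)

/-- `D` is a dyadic decomposition of the interval `[a, b)` with levels `≤ J`. -/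
def IsDecomp (J a b : ℕ) (D : Finset (ℕ × ℕ)) : Prop :=
  (∀ p ∈ D, p.1 ≤ J) ∧ (↑D : Set (ℕ × ℕ)).PairwiseDisjoint dblock ∧
    D.biUnion dblock = Finset.Ico a b

lemma isDecomp_empty (J a : ℕ) : IsDecomp J a a (∅ : Finset (ℕ × ℕ)) := by
  refine ⟨by simp, by simp, by simp⟩

lemma isDecomp_single (J j c : ℕ) (hj : j ≤ J) :
    IsDecomp J (c * 2 ^ j) ((c + 1) * 2 ^ j) {(j, c)} := by
  refine ⟨by simp [hj], by simp, by simp [dblock]⟩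

lemma isDecomp_mono {J J' a b : ℕ} (h : J ≤ J') {D : Finset (ℕ × ℕ)}
    (hD : IsDecomp J a b D) : IsDecomp J' a b D :=
  ⟨fun p hp => (hD.1 p hp).trans h, hD.2.1, hD.2.2⟩

lemma block_subset {J a b : ℕ} {D : Finset (ℕ × ℕ)} (hD : IsDecomp J a b D)
    {p : ℕ × ℕ} (hp : p ∈ D) : dblock p ⊆ Finset.Ico a b := by
  rw [← hD.2.2]; exact Finset.subset_biUnion_of_mem dblock hp

lemma isDecomp_union {J a b c : ℕ} {D₁ D₂ : Finset (ℕ × ℕ)} (hab : a ≤ b) (hbc : b ≤ c)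
    (h₁ : IsDecomp J a b D₁) (h₂ : IsDecomp J b c D₂) : IsDecomp J a c (D₁ ∪ D₂) := by
  classical
  have key : ∀ r ∈ D₁, ∀ s ∈ D₂, Disjoint (dblock r) (dblock s) := fun r hr s hs =>
    Finset.disjoint_of_subset_left (block_subset h₁ hr)
      (Finset.disjoint_of_subset_right (block_subset h₂ hs)
        (Finset.Ico_disjoint_Ico_consecutive a b c))
  refine ⟨?_, ?_, ?_⟩
  · intro p hp; rcases Finset.mem_union.1 hp with h | h
    exacts [h₁.1 p h, h₂.1 p h]
  · intro p hp q hq hpq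
    simp only [Finset.coe_union, Set.mem_union, Finset.mem_coe] at hp hq
    rcases hp with hp | hp <;> rcases hq with hq | hq
    · exact h₁.2.1 hp hq hpq
    · exact key _ hp _ hq
    · exact (key _ hq _ hp).symm
    · exact h₂.2.1 hp hq hpq
  · ext x
    simp only [Finset.mem_biUnion, Finset.mem_union]
    constructor
    · rintro ⟨p, hp | hp, hx⟩
      · exact Finset.mem_of_subset (Finset.Ico_subset_Ico le_rfl hbc) (block_subset h₁ hp hx)
      · exact Finset.mem_of_subset (Finset.Ico_subset_Ico hab le_rfl) (block_subset h₂ hp hx)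
    · intro hx
      rcases Finset.mem_union.1 ((Finset.Ico_union_Ico_eq_Ico hab hbc).symm ▸ hx) with h | h
      · rw [← h₁.2.2] at h
        obtain ⟨p, hp, hxp⟩ := Finset.mem_biUnion.1 h
        exact ⟨p, Or.inl hp, hxp⟩
      · rw [← h₂.2.2] at h
        obtain ⟨p, hp, hxp⟩ := Finset.mem_biUnion.1 h
        exact ⟨p, Or.inr hp, hxp⟩

/-- Suffix decomposition: `[a, (c+1)·2^J)` for `c·2^J ≤ a ≤ (c+1)·2^J`,
with at most `J + 1` blocks. -/
lemma suffix_decomp : ∀ J c a : ℕ, c * 2 ^ J ≤ a → a ≤ (c + 1) * 2 ^ J →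
    ∃ D : Finset (ℕ × ℕ), IsDecomp J a ((c + 1) * 2 ^ J) D ∧ D.card ≤ J + 1 := by
  intro J
  induction J with
  | zero =>
    intro c a h1 h2
    simp only [pow_zero, mul_one] at h1 h2
    rcases Nat.eq_or_lt_of_le h1 with h | h
    · exact ⟨{(0, c)}, by simpa [h] using isDecomp_single 0 0 c le_rfl, by simp⟩
    · have : a = c + 1 := le_antisymm h2 h
      refine ⟨∅, ?_, by simp⟩
      rw [pow_zero, mul_one, ← this]
      exact isDecomp_empty 0 a
  | succ J ih =>
    intro c a h1 h2
    have hpow : (2:ℕ) ^ (J+1) = 2 * 2 ^ J := by ring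
    have hmid : (2 * c + 1) * 2 ^ J = c * 2 ^ (J + 1) + 2 ^ J := by ring
    have hend : (2 * c + 2) * 2 ^ J = (c + 1) * 2 ^ (J + 1) := by ring
    by_cases hc : a ≤ (2 * c + 1) * 2 ^ J
    · -- left half suffix + right half block
      have h1' : 2 * c * 2 ^ J ≤ a := by nlinarith [h1, hpow]
      obtain ⟨D₁, hD₁, hc₁⟩ := ih (2 * c) a h1' hc
      refine ⟨D₁ ∪ {(J, 2 * c + 1)}, ?_, ?_⟩
      · have hs : IsDecomp (J + 1) ((2 * c + 1) * 2 ^ J) ((2 * c + 2) * 2 ^ J)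
            {(J, 2 * c + 1)} := isDecomp_single (J + 1) J (2 * c + 1) (Nat.le_succ J)
        have := isDecomp_union hc (by nlinarith) (isDecomp_mono (Nat.le_succ J) hD₁) hs
        rwa [hend] at this
      · exact le_trans (Finset.card_union_le _ _) (by simpa using Nat.add_le_add_right hc₁ 1)
    · -- right half
      push_neg at hc
      have h2' : a ≤ (2 * c + 2) * 2 ^ J := by nlinarith [h2, hpow]
      obtain ⟨D, hD, hcD⟩ := ih (2 * c + 1) a (le_of_lt hc) h2'
      rw [hend] at hD
      exact ⟨D, isDecomp_mono (Nat.le_succ J) hD, hcD.trans (Nat.le_succ _)⟩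

/-- Prefix decomposition: `[c·2^J, b)` for `c·2^J ≤ b ≤ (c+1)·2^J`. -/
lemma prefix_decomp : ∀ J c b : ℕ, c * 2 ^ J ≤ b → b ≤ (c + 1) * 2 ^ J →
    ∃ D : Finset (ℕ × ℕ), IsDecomp J (c * 2 ^ J) b D ∧ D.card ≤ J + 1 := by
  intro J
  induction J with
  | zero =>
    intro c b h1 h2
    simp only [pow_zero, mul_one] at h1 h2
    rcases Nat.eq_or_lt_of_le h1 with h | h
    · exact ⟨∅, by simpa [h] using isDecomp_empty 0 c, by simp⟩
    · have hb : b = c + 1 := le_antisymm h2 h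
      exact ⟨{(0, c)}, by simpa [hb] using isDecomp_single 0 0 c le_rfl, by simp⟩
  | succ J ih =>
    intro c b h1 h2
    have hpow : (2:ℕ) ^ (J+1) = 2 * 2 ^ J := by ring
    have hmid : (2 * c + 1) * 2 ^ J = c * 2 ^ (J + 1) + 2 ^ J := by ring
    by_cases hc : b ≤ (2 * c + 1) * 2 ^ J
    · -- inside left half
      have h1' : 2 * c * 2 ^ J ≤ b := by nlinarith [h1, hpow]
      obtain ⟨D, hD, hcD⟩ := ih (2 * c) b h1' hc
      have : 2 * c * 2 ^ J = c * 2 ^ (J + 1) := by ring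
      rw [this] at hD
      exact ⟨D, isDecomp_mono (Nat.le_succ J) hD, hcD.trans (Nat.le_succ _)⟩
    · push_neg at hc
      have h2' : b ≤ (2 * c + 2) * 2 ^ J := by nlinarith [h2, hpow]
      obtain ⟨D₂, hD₂, hc₂⟩ := ih (2 * c + 1) b (le_of_lt hc) h2'
      refine ⟨{(J, 2 * c)} ∪ D₂, ?_, ?_⟩
      · have hs : IsDecomp (J + 1) (2 * c * 2 ^ J) ((2 * c + 1) * 2 ^ J) {(J, 2 * c)} :=
          isDecomp_single (J + 1) J (2 * c) (Nat.le_succ J)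
        have := isDecomp_union (by nlinarith) (le_of_lt hc) hs
          (isDecomp_mono (Nat.le_succ J) hD₂)
        have h2c : 2 * c * 2 ^ J = c * 2 ^ (J + 1) := by ring
        rwa [h2c] at this
      · exact le_trans (Finset.card_union_le _ _) (by simpa [add_comm] using Nat.add_le_add_left hc₂ 1)

/-- Main dyadic decomposition lemma. -/
lemma dyadic_decomp : ∀ J a b : ℕ, a ≤ b → b ≤ 2 ^ J →
    ∃ D : Finset (ℕ × ℕ), IsDecomp J a b D ∧ D.card ≤ 2 * (J + 1) := by
  suffices h : ∀ J c a b : ℕ, c * 2 ^ J ≤ a → a ≤ b → b ≤ (c + 1) * 2 ^ J →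
      ∃ D : Finset (ℕ × ℕ), IsDecomp J a b D ∧ D.card ≤ 2 * (J + 1) by
    intro J a b hab hb
    exact h J 0 a b (by simp) hab (by simpa using hb)
  intro J
  induction J with
  | zero =>
    intro c a b h1 hab h2
    simp only [pow_zero, mul_one] at h1 h2
    rcases Nat.eq_or_lt_of_le hab with h | h
    · exact ⟨∅, h ▸ isDecomp_empty 0 a, by simp⟩
    · have ha : a = c := le_antisymm (by omega) h1
      have hb : b = c + 1 := le_antisymm h2 (by omega)
      refine ⟨{(0, c)}, ?_, by simp⟩
      rw [ha, hb]
      simpa using isDecomp_single 0 0 c le_rfl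
  | succ J ih =>
    intro c a b h1 hab h2
    have hpow : (2:ℕ) ^ (J+1) = 2 * 2 ^ J := by ring
    by_cases hcb : b ≤ (2 * c + 1) * 2 ^ J
    · have h1' : 2 * c * 2 ^ J ≤ a := by nlinarith [h1, hpow]
      obtain ⟨D, hD, hcD⟩ := ih (2 * c) a b h1' hab hcb
      exact ⟨D, isDecomp_mono (Nat.le_succ J) hD, hcD.trans (by omega)⟩
    · push_neg at hcb
      by_cases hca : (2 * c + 1) * 2 ^ J ≤ a
      · have h2' : b ≤ (2 * c + 2) * 2 ^ J := by nlinarith [h2, hpow]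
        obtain ⟨D, hD, hcD⟩ := ih (2 * c + 1) a b hca hab h2'
        exact ⟨D, isDecomp_mono (Nat.le_succ J) hD, hcD.trans (by omega)⟩
      · push_neg at hca
        have h1' : 2 * c * 2 ^ J ≤ a := by nlinarith [h1, hpow]
        obtain ⟨D₁, hD₁, hc₁⟩ := suffix_decomp J (2 * c) a h1' (le_of_lt hca)
        have h2' : b ≤ (2 * c + 2) * 2 ^ J := by nlinarith [h2, hpow]
        obtain ⟨D₂, hD₂, hc₂⟩ := prefix_decomp J (2 * c + 1) b (le_of_lt hcb) h2'
        refine ⟨D₁ ∪ D₂, ?_, ?_⟩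
        · exact isDecomp_union (le_of_lt hca) (le_of_lt hcb)
            (isDecomp_mono (Nat.le_succ J) hD₁) (isDecomp_mono (Nat.le_succ J) hD₂)
        · exact le_trans (Finset.card_union_le _ _) (by omega)


variable {E : Type*} [NormedAddCommGroup E] [InnerProductSpace ℝ E]

/-- Sign-selection: one can choose signs so that the ℓ² sum of norms is dominated
by the norm of the signed sum. -/
lemma sign_selection {ι : Type*} [DecidableEq ι] (s : Finset ι) (b : ι → E) :
    ∃ σ : ι → ℝ, (∀ m, σ m = 1 ∨ σ m = -1) ∧
      ∑ m ∈ s, ‖b m‖ ^ 2 ≤ ‖∑ m ∈ s, σ m • b m‖ ^ 2 := by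
  classical
  induction s using Finset.induction_on with
  | empty => exact ⟨fun _ => 1, fun _ => Or.inl rfl, by simp⟩
  | @insert a s ha ih =>
    obtain ⟨σ, hσ, hs⟩ := ih
    set u := ∑ m ∈ s, σ m • b m with hu
    by_cases hcmp : ‖u - b a‖ ≤ ‖u + b a‖
    · refine ⟨Function.update σ a 1, ?_, ?_⟩
      · intro m; by_cases hm : m = a
        · subst hm; simp
        · simpa [Function.update_of_ne hm] using hσ m
      · have hsum : ∑ m ∈ s, Function.update σ a 1 m • b m = u := by
          rw [hu]
          refine Finset.sum_congr rfl fun m hm => ?_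
          rw [Function.update_of_ne (fun h => ha (by rw [← h]; exact hm)) 1 σ]
        have hfull : ∑ m ∈ insert a s, Function.update σ a 1 m • b m
            = (1:ℝ) • b a + u := by
          rw [Finset.sum_insert ha, hsum, Function.update_self]
        rw [Finset.sum_insert ha, hfull]
        have par := parallelogram_law_with_norm ℝ u (b a)
        have h1 : ‖u‖ ^ 2 + ‖b a‖ ^ 2 ≤ ‖u + b a‖ ^ 2 := by
          have h2 : ‖u - b a‖ ^ 2 ≤ ‖u + b a‖ ^ 2 := by
            apply sq_le_sq' <;> nlinarith [norm_nonneg (u - b a), norm_nonneg (u + b a)]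
          nlinarith [par]
        calc ‖b a‖ ^ 2 + ∑ m ∈ s, ‖b m‖ ^ 2 ≤ ‖b a‖ ^ 2 + ‖u‖ ^ 2 := by linarith
          _ ≤ ‖u + b a‖ ^ 2 := by linarith
          _ = ‖(1:ℝ) • b a + u‖ ^ 2 := by rw [one_smul, add_comm]
      -- done
    · push_neg at hcmp
      refine ⟨Function.update σ a (-1), ?_, ?_⟩
      · intro m; by_cases hm : m = a
        · subst hm; simp
        · simpa [Function.update_of_ne hm] using hσ m
      · have hsum : ∑ m ∈ s, Function.update σ a (-1) m • b m = u := by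
          rw [hu]
          refine Finset.sum_congr rfl fun m hm => ?_
          rw [Function.update_of_ne (fun h => ha (by rw [← h]; exact hm)) (-1) σ]
        have hfull : ∑ m ∈ insert a s, Function.update σ a (-1) m • b m
            = (-1:ℝ) • b a + u := by
          rw [Finset.sum_insert ha, hsum, Function.update_self]
        rw [Finset.sum_insert ha, hfull]
        have par := parallelogram_law_with_norm ℝ u (b a)
        have h1 : ‖u‖ ^ 2 + ‖b a‖ ^ 2 ≤ ‖u - b a‖ ^ 2 := by
          have h2 : ‖u + b a‖ ^ 2 ≤ ‖u - b a‖ ^ 2 := by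
            apply sq_le_sq' <;> nlinarith [norm_nonneg (u - b a), norm_nonneg (u + b a)]
          nlinarith [par]
        calc ‖b a‖ ^ 2 + ∑ m ∈ s, ‖b m‖ ^ 2 ≤ ‖b a‖ ^ 2 + ‖u‖ ^ 2 := by linarith
          _ ≤ ‖u - b a‖ ^ 2 := by linarith
          _ = ‖(-1:ℝ) • b a + u‖ ^ 2 := by rw [neg_one_smul, add_comm, ← sub_eq_add_neg]

lemma dblock_nonempty (p : ℕ × ℕ) : (dblock p).Nonempty := by
  refine ⟨p.2 * 2 ^ p.1, ?_⟩
  simp only [dblock, Finset.mem_Ico, le_refl, true_and]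
  have := Nat.pow_pos (n := p.1) (by norm_num : 0 < 2)
  nlinarith

section X
variable {X : Type} (N : ℕ) (F : Fin N → X → ℝ) (x : X)

/-- Extension of `F · x` to `ℕ` by zero. -/
noncomputable def Hf (q : ℕ) : ℝ := if h : q < N then F ⟨q, h⟩ x else 0

lemma sum_Hf (A : Finset ℕ) :
    ∑ q ∈ A, Hf N F x q = ∑ i ∈ univ.filter (fun i : Fin N => (i : ℕ) ∈ A), F i x := by
  classical
  rw [← Finset.sum_filter_of_ne (s := A) (f := Hf N F x) (p := fun q => q < N)
    (fun q _ hq => by by_contra h; exact hq (by simp [Hf, h])) ]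
  refine Finset.sum_bij' (fun q hq => (⟨q, (Finset.mem_filter.1 hq).2⟩ : Fin N))
    (fun i _ => (i : ℕ)) ?_ ?_ ?_ ?_ ?_
  · intro q hq
    simp only [Finset.mem_filter, Finset.mem_univ, true_and]
    exact (Finset.mem_filter.1 hq).1
  · intro i hi
    simp only [Finset.mem_filter] at hi ⊢
    exact ⟨hi.2, i.isLt⟩
  · intro q hq; rfl
  · intro i hi; rfl
  · intro q hq; simp [Hf, (Finset.mem_filter.1 hq).2]

lemma partial_sum_Hf (n : Fin N) :
    ∑ i ∈ univ.filter (fun i => i ≤ n), F i x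
      = ∑ q ∈ Finset.range ((n : ℕ) + 1), Hf N F x q := by
  rw [sum_Hf]
  refine Finset.sum_congr ?_ fun _ _ => rfl
  apply Finset.filter_congr
  intro i _
  simp only [Finset.mem_range, Nat.lt_succ_iff]
  exact ⟨fun h => Fin.le_def.1 h, fun h => Fin.le_def.2 h⟩

/-- The pointwise square-function bound coming from the dyadic decomposition. -/
lemma pointwise_bound (J : ℕ) (hNJ : N ≤ 2 ^ J) (k : ℕ) (t : Fin (k + 1) → Fin N)
    (ht : StrictMono t) :
    ∑ i : Fin k, ((∑ q ∈ univ.filter (fun q => q ≤ t i.succ), F q x)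
        - ∑ q ∈ univ.filter (fun q => q ≤ t i.castSucc), F q x) ^ 2
      ≤ (2 * (J + 1) : ℝ) * ∑ p ∈ Finset.range (J + 1) ×ˢ Finset.range (2 ^ J),
          (∑ q ∈ univ.filter (fun q : Fin N => (q : ℕ) ∈ dblock p), F q x) ^ 2 := by
  classical
  set sq : ℕ × ℕ → ℝ := fun p => (∑ q ∈ univ.filter (fun q : Fin N => (q : ℕ) ∈ dblock p), F q x) ^ 2 with hsq
  set a : Fin k → ℕ := fun i => (t i.castSucc : ℕ) + 1 with ha
  set b : Fin k → ℕ := fun i => (t i.succ : ℕ) + 1 with hb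
  have hab : ∀ i, a i ≤ b i := fun i =>
    Nat.succ_le_succ (le_of_lt (ht (Fin.castSucc_lt_succ (i := i))))
  have hb2J : ∀ i, b i ≤ 2 ^ J := fun i => le_trans (t i.succ).2 hNJ
  choose D hD hcard using fun i : Fin k => dyadic_decomp J (a i) (b i) (hab i) (hb2J i)
  -- increments as block sums
  have hdiff : ∀ i : Fin k,
      (∑ q ∈ univ.filter (fun q => q ≤ t i.succ), F q x)
        - ∑ q ∈ univ.filter (fun q => q ≤ t i.castSucc), F q x
      = ∑ p ∈ D i, ∑ q ∈ dblock p, Hf N F x q := by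
    intro i
    rw [partial_sum_Hf, partial_sum_Hf, ← Finset.sum_Ico_eq_sub _ (hab i),
      ← Finset.sum_biUnion (hD i).2.1, (hD i).2.2]
  -- Cauchy-Schwarz on each increment
  have hCS : ∀ i : Fin k,
      ((∑ q ∈ univ.filter (fun q => q ≤ t i.succ), F q x)
        - ∑ q ∈ univ.filter (fun q => q ≤ t i.castSucc), F q x) ^ 2
      ≤ (2 * (J + 1) : ℝ) * ∑ p ∈ D i, sq p := by
    intro i
    rw [hdiff i]
    calc (∑ p ∈ D i, ∑ q ∈ dblock p, Hf N F x q) ^ 2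
        ≤ (D i).card * ∑ p ∈ D i, (∑ q ∈ dblock p, Hf N F x q) ^ 2 :=
          sq_sum_le_card_mul_sum_sq
      _ ≤ (2 * (J + 1) : ℝ) * ∑ p ∈ D i, sq p := by
          apply mul_le_mul
          · exact_mod_cast hcard i
          · refine le_of_eq (Finset.sum_congr rfl fun p hp => ?_)
            rw [hsq]; rw [sum_Hf]
          · positivity
          · positivity
  -- disjointness of the D i
  have hDdisj : ∀ i i' : Fin k, i ≠ i' → Disjoint (D i) (D i') := by
    intro i i' hne
    wlog hlt : i < i' generalizing i i'
    · exact (this i' i hne.symm ((hne.lt_or_gt).resolve_left hlt)).symm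
    have hord : b i ≤ a i' := by
      have h1 : i.succ ≤ i'.castSucc := by
        rw [Fin.le_def]
        simp only [Fin.val_succ, Fin.coe_castSucc]
        exact Nat.succ_le_of_lt hlt
      exact Nat.succ_le_succ (Fin.le_def.1 (ht.monotone h1))
    rw [Finset.disjoint_left]
    intro p hpi hpi'
    obtain ⟨q, hq⟩ := dblock_nonempty p
    have h1 := block_subset (hD i) hpi hq
    have h2 := block_subset (hD i') hpi' hq
    simp only [Finset.mem_Ico] at h1 h2
    omega
  -- sum up
  calc ∑ i : Fin k, ((∑ q ∈ univ.filter (fun q => q ≤ t i.succ), F q x)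
        - ∑ q ∈ univ.filter (fun q => q ≤ t i.castSucc), F q x) ^ 2
      ≤ ∑ i : Fin k, (2 * (J + 1) : ℝ) * ∑ p ∈ D i, sq p :=
        Finset.sum_le_sum fun i _ => hCS i
    _ = (2 * (J + 1) : ℝ) * ∑ i : Fin k, ∑ p ∈ D i, sq p := by rw [Finset.mul_sum]
    _ = (2 * (J + 1) : ℝ) * ∑ p ∈ Finset.univ.biUnion D, sq p := by
        rw [Finset.sum_biUnion]
        intro i _ i' _ hne
        exact hDdisj i i' hne
    _ ≤ (2 * (J + 1) : ℝ) * ∑ p ∈ Finset.range (J + 1) ×ˢ Finset.range (2 ^ J), sq p := by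
        apply mul_le_mul_of_nonneg_left _ (by positivity)
        apply Finset.sum_le_sum_of_subset_of_nonneg
        · intro p hp
          obtain ⟨i, _, hpi⟩ := Finset.mem_biUnion.1 hp
          have hj : p.1 ≤ J := (hD i).1 p hpi
          have hm : p.2 < 2 ^ J := by
            obtain ⟨q, hq⟩ := dblock_nonempty p
            have h1 := block_subset (hD i) hpi hq
            simp only [Finset.mem_Ico] at h1
            simp only [dblock, Finset.mem_Ico] at hq
            have h2 : p.2 * 2 ^ p.1 < 2 ^ J := lt_of_le_of_lt hq.1 (lt_of_lt_of_le h1.2 (hb2J i))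
            have h3 : p.2 ≤ p.2 * 2 ^ p.1 := Nat.le_mul_of_pos_right _ (Nat.pow_pos (by norm_num))
            omega
          exact Finset.mem_product.2 ⟨Finset.mem_range.2 (Nat.lt_succ_of_le hj), Finset.mem_range.2 hm⟩
        · intro p _ _; positivity
end X


section MeasureAux
variable {X : Type} [MeasurableSpace X] {μ : Measure X}


lemma toLp_finset_sum {ι : Type*} (s : Finset ι) (f : ι → X → ℝ)
    (hf : ∀ i, MemLp (f i) 2 μ) :
    (memLp_finset_sum' s fun i _ => hf i).toLp (∑ i ∈ s, f i)
      = ∑ i ∈ s, (hf i).toLp (f i) := by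
  classical
  induction s using Finset.induction_on with
  | empty => simp [MemLp.toLp_zero]
  | @insert a s ha ih =>
    have h1 : ((hf a).add (memLp_finset_sum' s fun i _ => hf i)).toLp
        (f a + ∑ i ∈ s, f i) = (hf a).toLp (f a) +
        (memLp_finset_sum' s fun i _ => hf i).toLp (∑ i ∈ s, f i) :=
      MemLp.toLp_add _ _
    have h0 : (memLp_finset_sum' (insert a s) fun i _ => hf i).toLp
        (∑ i ∈ insert a s, f i) = ((hf a).add
        (memLp_finset_sum' s fun i _ => hf i)).toLp (f a + ∑ i ∈ s, f i) := by
      rw [MemLp.toLp_eq_toLp_iff]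
      exact Filter.Eventually.of_forall fun x => by rw [Finset.sum_insert ha]
    rw [h0, h1, ih, Finset.sum_insert ha]


/-- Key orthogonality-type bound: for pairwise disjoint blocks, the ℓ² sum of
the `L²` norms of the block sums is controlled by the sign hypothesis. -/
lemma blocks_bound (N : ℕ) (F : Fin N → X → ℝ) (B : ℝ) (hB : 0 ≤ B)
    (hF : ∀ i, MemLp (F i) 2 μ)
    (hsign : ∀ ε : Fin N → ℝ, (∀ i, ε i ∈ ({-1, 0, 1} : Set ℝ)) →
      eLpNorm (fun x => ∑ i, ε i * F i x) 2 μ ≤ ENNReal.ofReal B)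
    {M : ℕ} (T : Fin M → Finset (Fin N))
    (hT : ∀ m m', m ≠ m' → Disjoint (T m) (T m')) :
    ∑ m : Fin M, (eLpNorm (fun x => ∑ i ∈ T m, F i x) 2 μ) ^ 2
      ≤ (ENNReal.ofReal B) ^ 2 := by
  classical
  set f : Fin N → Lp ℝ 2 μ := fun i => (hF i).toLp (F i) with hf
  have hbm : ∀ m : Fin M, MemLp (∑ i ∈ T m, F i) 2 μ :=
    fun m => memLp_finset_sum' (T m) fun i _ => hF i
  set b : Fin M → Lp ℝ 2 μ := fun m => (hbm m).toLp _ with hbdef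
  have hb_eq : ∀ m, b m = ∑ i ∈ T m, f i := fun m => toLp_finset_sum (T m) F hF
  obtain ⟨σ, hσ, hsel⟩ := sign_selection Finset.univ b
  -- the induced sign pattern on indices
  set ε : Fin N → ℝ := fun i => ∑ m : Fin M, (if i ∈ T m then σ m else 0) with hε
  have hεmem : ∀ i, ε i ∈ ({-1, 0, 1} : Set ℝ) := by
    intro i
    by_cases h : ∃ m, i ∈ T m
    · obtain ⟨m₀, hm₀⟩ := h
      have : ε i = σ m₀ := by
        rw [hε]
        have := Finset.sum_eq_single (s := Finset.univ)
          (f := fun m => if i ∈ T m then σ m else 0) m₀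
          (fun m _ hm => by
            have hni : i ∉ T m := fun hi => Finset.disjoint_left.1 (hT m m₀ hm) hi hm₀
            simp [hni])
          (fun hc => absurd (Finset.mem_univ m₀) hc)
        simpa [hm₀] using this
      rw [this]
      rcases hσ m₀ with h | h <;> simp [h]
    · push_neg at h
      have : ε i = 0 := by rw [hε]; exact Finset.sum_eq_zero fun m _ => by simp [h m]
      simp [this]
  -- the signed sum identity
  have hsum_eq : ∑ i, ε i • f i = ∑ m : Fin M, σ m • b m := by
    calc ∑ i, ε i • f i
        = ∑ i, ∑ m : Fin M, (if i ∈ T m then σ m • f i else 0) := by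
          refine Finset.sum_congr rfl fun i _ => ?_
          rw [hε, Finset.sum_smul]
          exact Finset.sum_congr rfl fun m _ => by split <;> simp
      _ = ∑ m : Fin M, ∑ i, (if i ∈ T m then σ m • f i else 0) := Finset.sum_comm
      _ = ∑ m : Fin M, σ m • b m := by
          refine Finset.sum_congr rfl fun m _ => ?_
          rw [Finset.sum_ite_mem, Finset.univ_inter, hb_eq m, Finset.smul_sum]
  -- hypothesis applied to ε
  have hmem : MemLp (fun x => ∑ i, ε i * F i x) 2 μ := by
    have : (fun x => ∑ i, ε i * F i x) = ∑ i, ε i • F i := by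
      funext x; rw [Finset.sum_apply]; exact Finset.sum_congr rfl fun i _ => rfl
    rw [this]
    exact memLp_finset_sum' _ fun i _ => (hF i).const_smul (ε i)
  have htoLp : hmem.toLp _ = ∑ i, ε i • f i := by
    have h1 : (fun x => ∑ i, ε i * F i x) = ∑ i, ε i • F i := by
      funext x; rw [Finset.sum_apply]; exact Finset.sum_congr rfl fun i _ => rfl
    have h2 : (memLp_finset_sum' Finset.univ fun i _ => (hF i).const_smul (ε i)).toLp
        (∑ i, ε i • F i) = ∑ i, ((hF i).const_smul (ε i)).toLp (ε i • F i) :=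
      toLp_finset_sum Finset.univ _ fun i => (hF i).const_smul (ε i)
    calc hmem.toLp _ = (memLp_finset_sum' Finset.univ fun i _ =>
          (hF i).const_smul (ε i)).toLp (∑ i, ε i • F i) := by congr 1
      _ = ∑ i, ((hF i).const_smul (ε i)).toLp (ε i • F i) := h2
      _ = ∑ i, ε i • f i := Finset.sum_congr rfl fun i _ => MemLp.toLp_const_smul _ _
  have hnorm : ‖∑ m : Fin M, σ m • b m‖ ≤ B := by
    rw [← hsum_eq, ← htoLp, Lp.norm_toLp]
    exact ENNReal.toReal_le_of_le_ofReal hB (hsign ε hεmem)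
  -- conclude
  have hreal : ∑ m : Fin M, ‖b m‖ ^ 2 ≤ B ^ 2 :=
    hsel.trans (by nlinarith [norm_nonneg (∑ m : Fin M, σ m • b m)])
  have hconv : ∀ m : Fin M, eLpNorm (fun x => ∑ i ∈ T m, F i x) 2 μ
      = ENNReal.ofReal ‖b m‖ := by
    intro m
    have h1 : (fun x => ∑ i ∈ T m, F i x) = ∑ i ∈ T m, F i := by
      funext x; rw [Finset.sum_apply]
    rw [h1, hbdef, Lp.norm_toLp, ENNReal.ofReal_toReal (hbm m).2.ne]
  calc ∑ m : Fin M, (eLpNorm (fun x => ∑ i ∈ T m, F i x) 2 μ) ^ 2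
      = ∑ m : Fin M, ENNReal.ofReal (‖b m‖ ^ 2) := by
        refine Finset.sum_congr rfl fun m _ => ?_
        rw [hconv m, ENNReal.ofReal_pow (norm_nonneg _)]
    _ = ENNReal.ofReal (∑ m : Fin M, ‖b m‖ ^ 2) :=
        (ENNReal.ofReal_sum_of_nonneg fun m _ => by positivity).symm
    _ ≤ ENNReal.ofReal (B ^ 2) := ENNReal.ofReal_le_ofReal hreal
    _ = (ENNReal.ofReal B) ^ 2 := ENNReal.ofReal_pow hB 2

/-- `∫ g² dμ` in `ℝ≥0∞` form equals the square of the `L²` seminorm. -/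
lemma lintegral_sq_eq (g : X → ℝ) :
    ∫⁻ x, ENNReal.ofReal ((g x) ^ 2) ∂μ = (eLpNorm g 2 μ) ^ 2 := by
  rw [eLpNorm_eq_lintegral_rpow_enorm_toReal (by norm_num) (by norm_num)]
  simp only [ENNReal.toReal_ofNat]
  have hpt : ∀ x : X, (‖g x‖ₑ) ^ (2 : ℝ) = ENNReal.ofReal ((g x) ^ 2) := by
    intro x
    rw [Real.enorm_eq_ofReal_abs, ENNReal.ofReal_rpow_of_nonneg (abs_nonneg _) (by norm_num)]
    congr 1
    rw [show ((2:ℝ)) = ((2:ℕ):ℝ) by norm_num, Real.rpow_natCast, sq_abs]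
  rw [lintegral_congr hpt]
  rw [← ENNReal.rpow_natCast (_ ^ ((1:ℝ)/2)) 2, ← ENNReal.rpow_mul]
  norm_num


end MeasureAux

end Auxiliary

/-- Variational Rademacher–Menshov inequality. -/
theorem rademacher_menshov_variational :
    ∃ C : ℝ, 0 < C ∧
      ∀ (X : Type) (_ : MeasurableSpace X) (μ : Measure X) (N : ℕ), 2 ≤ N →
        ∀ (F : Fin N → X → ℝ) (B : ℝ), 0 ≤ B →
          (∀ i, MemLp (F i) 2 μ) →
          (∀ ε : Fin N → ℝ, (∀ i, ε i ∈ ({-1, 0, 1} : Set ℝ)) →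
            eLpNorm (fun x => ∑ i, ε i * F i x) 2 μ ≤ ENNReal.ofReal B) →
          (∫⁻ x, (var2Fin N (fun n => ∑ i ∈ Finset.univ.filter (fun i => i ≤ n), F i x)) ^ 2 ∂μ)
              ^ ((1 : ℝ) / 2)
            ≤ ENNReal.ofReal (C * Real.log N * B) := by
  have hlog2 : 0 < Real.log 2 := Real.log_pos one_lt_two
  refine ⟨6 / Real.log 2, by positivity, ?_⟩
  intro X mX μ N hN F B hB hF hsign
  classical
  set J : ℕ := Nat.clog 2 N with hJdef
  have hNJ : N ≤ 2 ^ J := Nat.le_pow_clog one_lt_two N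
  set P : Finset (ℕ × ℕ) := Finset.range (J + 1) ×ˢ Finset.range (2 ^ J) with hP
  set sblk : ℕ × ℕ → X → ℝ :=
    fun p x => ∑ q ∈ univ.filter (fun q : Fin N => (q : ℕ) ∈ dblock p), F q x with hsblk
  have hmemblk : ∀ p, MemLp (sblk p) 2 μ := by
    intro p
    have h1 : sblk p = ∑ q ∈ univ.filter (fun q : Fin N => (q : ℕ) ∈ dblock p), F q := by
      funext x; rw [hsblk]; rw [Finset.sum_apply]
    rw [h1]
    exact memLp_finset_sum' _ fun i _ => hF i
  -- Step 1: pointwise bound on the squared 2-variation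
  have hvar : ∀ x : X,
      (var2Fin N (fun n => ∑ i ∈ Finset.univ.filter (fun i => i ≤ n), F i x)) ^ 2
        ≤ ENNReal.ofReal ((2 * (J + 1) : ℝ) * ∑ p ∈ P, (sblk p x) ^ 2) := by
    intro x
    set Y := ENNReal.ofReal ((2 * (J + 1) : ℝ) * ∑ p ∈ P, (sblk p x) ^ 2) with hY
    have h1 : (var2Fin N (fun n => ∑ i ∈ Finset.univ.filter (fun i => i ≤ n), F i x))
        ≤ Y ^ ((1 : ℝ) / 2) := by
      rw [var2Fin]
      refine iSup_le fun k => iSup_le fun t => iSup_le fun ht => ?_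
      refine ENNReal.rpow_le_rpow ?_ (by norm_num)
      calc ∑ i : Fin k, (ENNReal.ofReal
            |(∑ q ∈ univ.filter (fun q => q ≤ t i.succ), F q x)
              - ∑ q ∈ univ.filter (fun q => q ≤ t i.castSucc), F q x|) ^ 2
          = ENNReal.ofReal (∑ i : Fin k,
              ((∑ q ∈ univ.filter (fun q => q ≤ t i.succ), F q x)
              - ∑ q ∈ univ.filter (fun q => q ≤ t i.castSucc), F q x) ^ 2) := by
            rw [ENNReal.ofReal_sum_of_nonneg fun i _ => sq_nonneg _]
            refine Finset.sum_congr rfl fun i _ => ?_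
            rw [← sq_abs, ENNReal.ofReal_pow (abs_nonneg _)]
        _ ≤ Y := ENNReal.ofReal_le_ofReal (pointwise_bound N F x J hNJ k t ht)
    calc (var2Fin N (fun n => ∑ i ∈ Finset.univ.filter (fun i => i ≤ n), F i x)) ^ 2
        ≤ (Y ^ ((1 : ℝ) / 2)) ^ 2 := pow_le_pow_left₀ (zero_le (a := _)) h1 2
      _ = Y := by
          rw [← ENNReal.rpow_natCast (Y ^ ((1:ℝ)/2)) 2, ← ENNReal.rpow_mul]
          norm_num
  -- Step 2: integrate
  have haem : ∀ p ∈ P, AEMeasurable (fun x => ENNReal.ofReal ((sblk p x) ^ 2)) μ := by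
    intro p _
    exact ENNReal.measurable_ofReal.comp_aemeasurable
      (((hmemblk p).aestronglyMeasurable.aemeasurable).pow_const 2)
  have hint : (∫⁻ x, (var2Fin N
        (fun n => ∑ i ∈ Finset.univ.filter (fun i => i ≤ n), F i x)) ^ 2 ∂μ)
      ≤ ENNReal.ofReal (2 * (J + 1) : ℝ) * ∑ p ∈ P, (eLpNorm (sblk p) 2 μ) ^ 2 := by
    calc (∫⁻ x, (var2Fin N
          (fun n => ∑ i ∈ Finset.univ.filter (fun i => i ≤ n), F i x)) ^ 2 ∂μ)
        ≤ ∫⁻ x, ENNReal.ofReal ((2 * (J + 1) : ℝ) * ∑ p ∈ P, (sblk p x) ^ 2) ∂μ :=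
          lintegral_mono hvar
      _ = ∫⁻ x, ENNReal.ofReal (2 * (J + 1) : ℝ)
            * ENNReal.ofReal (∑ p ∈ P, (sblk p x) ^ 2) ∂μ := by
          refine lintegral_congr fun x => ?_
          rw [ENNReal.ofReal_mul (by positivity)]
      _ = ENNReal.ofReal (2 * (J + 1) : ℝ)
            * ∫⁻ x, ENNReal.ofReal (∑ p ∈ P, (sblk p x) ^ 2) ∂μ :=
          lintegral_const_mul' _ _ ENNReal.ofReal_ne_top
      _ = ENNReal.ofReal (2 * (J + 1) : ℝ)
            * ∑ p ∈ P, ∫⁻ x, ENNReal.ofReal ((sblk p x) ^ 2) ∂μ := by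
          congr 1
          rw [← lintegral_finset_sum' P haem]
          exact lintegral_congr fun x =>
            ENNReal.ofReal_sum_of_nonneg fun p _ => sq_nonneg _
      _ = ENNReal.ofReal (2 * (J + 1) : ℝ) * ∑ p ∈ P, (eLpNorm (sblk p) 2 μ) ^ 2 := by
          congr 1
          exact Finset.sum_congr rfl fun p _ => lintegral_sq_eq (sblk p)
  -- Step 3: per-level bound
  have hlevel : ∀ j : ℕ,
      ∑ m ∈ Finset.range (2 ^ J), (eLpNorm (sblk (j, m)) 2 μ) ^ 2
        ≤ (ENNReal.ofReal B) ^ 2 := by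
    intro j
    have hTdisj : ∀ m m' : Fin (2 ^ J), m ≠ m' →
        Disjoint (univ.filter (fun q : Fin N => (q : ℕ) ∈ dblock (j, (m : ℕ))))
          (univ.filter (fun q : Fin N => (q : ℕ) ∈ dblock (j, (m' : ℕ)))) := by
      intro m m' hne
      rw [Finset.disjoint_left]
      intro q hq hq'
      simp only [Finset.mem_filter, Finset.mem_univ, true_and, dblock, Finset.mem_Ico] at hq hq'
      have hmm' : (m : ℕ) ≠ (m' : ℕ) := fun h => hne (Fin.ext h)
      rcases lt_or_gt_of_ne hmm' with h | h
      · have hmul : ((m : ℕ) + 1) * 2 ^ j ≤ (m' : ℕ) * 2 ^ j :=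
          Nat.mul_le_mul_right (2 ^ j) (Nat.succ_le_of_lt h)
        exact absurd hq'.1 (not_le.2 (lt_of_lt_of_le hq.2 hmul))
      · have hmul : ((m' : ℕ) + 1) * 2 ^ j ≤ (m : ℕ) * 2 ^ j :=
          Nat.mul_le_mul_right (2 ^ j) (Nat.succ_le_of_lt h)
        exact absurd hq.1 (not_le.2 (lt_of_lt_of_le hq'.2 hmul))
    have hbl := blocks_bound (μ := μ) N F B hB hF hsign
      (fun m : Fin (2 ^ J) => univ.filter (fun q : Fin N => (q : ℕ) ∈ dblock (j, (m : ℕ))))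
      hTdisj
    have hrw : ∑ m : Fin (2 ^ J),
        (eLpNorm (fun x => ∑ i ∈ univ.filter
          (fun q : Fin N => (q : ℕ) ∈ dblock (j, (m : ℕ))), F i x) 2 μ) ^ 2
        = ∑ m ∈ Finset.range (2 ^ J), (eLpNorm (sblk (j, m)) 2 μ) ^ 2 := by
      exact Fin.sum_univ_eq_sum_range (fun m => (eLpNorm (sblk (j, m)) 2 μ) ^ 2) (2 ^ J)
    rw [← hrw]
    exact hbl
  -- Step 4: combine
  have hsumP : ∑ p ∈ P, (eLpNorm (sblk p) 2 μ) ^ 2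
      ≤ ((J + 1 : ℕ) : ℝ≥0∞) * (ENNReal.ofReal B) ^ 2 := by
    rw [hP, Finset.sum_product]
    calc ∑ j ∈ Finset.range (J + 1), ∑ m ∈ Finset.range (2 ^ J),
          (eLpNorm (sblk (j, m)) 2 μ) ^ 2
        ≤ ∑ _j ∈ Finset.range (J + 1), (ENNReal.ofReal B) ^ 2 :=
          Finset.sum_le_sum fun j _ => hlevel j
      _ = ((J + 1 : ℕ) : ℝ≥0∞) * (ENNReal.ofReal B) ^ 2 := by
          rw [Finset.sum_const, Finset.card_range, nsmul_eq_mul]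
  have htotal : (∫⁻ x, (var2Fin N
        (fun n => ∑ i ∈ Finset.univ.filter (fun i => i ≤ n), F i x)) ^ 2 ∂μ)
      ≤ ENNReal.ofReal ((2 * (J + 1) : ℝ) * ((J + 1 : ℕ) * B ^ 2)) := by
    refine hint.trans ?_
    refine le_trans (mul_le_mul_right hsumP _) (le_of_eq ?_)
    rw [← ENNReal.ofReal_pow hB, ← ENNReal.ofReal_natCast (J + 1),
      ← ENNReal.ofReal_mul (by positivity), ← ENNReal.ofReal_mul (by positivity)]
  -- Step 5: the real-number inequality
  obtain ⟨j0, hj0⟩ : ∃ j0, J = j0 + 1 := by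
    have : 0 < J := Nat.clog_pos one_lt_two (lt_of_lt_of_le one_lt_two hN)
    exact ⟨J - 1, by omega⟩
  have hLN : Real.log 2 ≤ Real.log N :=
    Real.log_le_log (by norm_num) (by exact_mod_cast hN)
  have hj0L : (j0 : ℝ) * Real.log 2 ≤ Real.log N := by
    have hp : (2 : ℕ) ^ j0 < N := by
      have := Nat.pow_pred_clog_lt_self one_lt_two (lt_of_lt_of_le one_lt_two hN)
      rwa [← hJdef, hj0] at this
    have hp' : ((2 : ℝ)) ^ j0 ≤ (N : ℝ) := by exact_mod_cast hp.le
    calc (j0 : ℝ) * Real.log 2 = Real.log ((2 : ℝ) ^ j0) := by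
          rw [Real.log_pow]
      _ ≤ Real.log N := Real.log_le_log (by positivity) hp'
  have hreal : (2 * (J + 1) : ℝ) * ((J + 1 : ℕ) * B ^ 2)
      ≤ (6 / Real.log 2 * Real.log N * B) ^ 2 := by
    have hkey : (2 * (J + 1) : ℝ) * ((J + 1 : ℕ) : ℝ)
        ≤ (6 / Real.log 2 * Real.log N) ^ 2 := by
      have hJr : ((J : ℝ) + 1) = (j0 : ℝ) + 2 := by
        rw [hj0]; push_cast; ring
      have hcast : ((J + 1 : ℕ) : ℝ) = (j0 : ℝ) + 2 := by rw [hj0]; push_cast; ring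
      rw [hcast]
      have h3 : ((j0 : ℝ) + 2) * Real.log 2 ≤ 3 * Real.log N := by nlinarith
      have hL0 : 0 < Real.log N := lt_of_lt_of_le hlog2 hLN
      have hj2 : (0 : ℝ) ≤ (j0 : ℝ) + 2 := by positivity
      rw [div_mul_eq_mul_div, div_pow, le_div_iff₀ (by positivity)]
      nlinarith [mul_self_le_mul_self
        (by positivity : (0:ℝ) ≤ ((j0:ℝ) + 2) * Real.log 2) h3, hJr,
        sq_nonneg (Real.log N), hL0.le, hlog2.le]
    calc (2 * (J + 1) : ℝ) * ((J + 1 : ℕ) * B ^ 2)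
        = ((2 * (J + 1) : ℝ) * ((J + 1 : ℕ) : ℝ)) * B ^ 2 := by ring
      _ ≤ (6 / Real.log 2 * Real.log N) ^ 2 * B ^ 2 :=
          mul_le_mul_of_nonneg_right hkey (sq_nonneg B)
      _ = (6 / Real.log 2 * Real.log N * B) ^ 2 := by ring
  -- final chain
  have hCLB : 0 ≤ 6 / Real.log 2 * Real.log N * B := by
    have hL0 : 0 < Real.log N := lt_of_lt_of_le hlog2 hLN
    positivity
  calc (∫⁻ x, (var2Fin N
        (fun n => ∑ i ∈ Finset.univ.filter (fun i => i ≤ n), F i x)) ^ 2 ∂μ) ^ ((1:ℝ)/2)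
      ≤ (ENNReal.ofReal ((2 * (J + 1) : ℝ) * ((J + 1 : ℕ) * B ^ 2))) ^ ((1:ℝ)/2) :=
        ENNReal.rpow_le_rpow htotal (by norm_num)
    _ = ENNReal.ofReal (((2 * (J + 1) : ℝ) * ((J + 1 : ℕ) * B ^ 2)) ^ ((1:ℝ)/2)) :=
        ENNReal.ofReal_rpow_of_nonneg (by positivity) (by norm_num)
    _ ≤ ENNReal.ofReal (6 / Real.log 2 * Real.log N * B) := by
        apply ENNReal.ofReal_le_ofReal
        rw [← Real.sqrt_eq_rpow]
        calc Real.sqrt ((2 * (J + 1) : ℝ) * ((J + 1 : ℕ) * B ^ 2))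
            ≤ Real.sqrt ((6 / Real.log 2 * Real.log N * B) ^ 2) :=
              Real.sqrt_le_sqrt hreal
          _ = 6 / Real.log 2 * Real.log N * B := Real.sqrt_sq hCLB
end

section
/- Let H be integrable on ℝ^d with ‖H‖_∞ ≤ M 2^{δ₀ s} 2^{−kd} and supp H ⊆ {2^{k−2} ≤ |y| ≤ 2^k}. Let 𝒬 be pairwise disjoint cubes of side length 2^{k−s} with ‖b_Q‖₁ ≤ α|Q| for functions b_Q supported in Q. Fix x and an annulus E = {y : ε₁ ≤ |y| ≤ ε₂} with 2^{k−1} ≤ ε₁ < ε₂ ≤ 2^k, and let B_{bd} = ∑ b_Q where the sum is over cubes Q of side 2^{k−s} with (x − Q) ∩ E^c ≠ ∅ and (x−Q) ∩ E ≠ ∅ (boundary cubes). Then |(H χ_E) * B_{bd}(x)| ≤ C M α 2^{−(1−δ₀)s}, using that at most C 2^{s(d−1)} such boundary cubes meet the two spheres of radii ε₁, ε₂ around x. -/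
open Set MeasureTheory


lemma aux_pow_sub_pow (n : ℕ) {a b : ℝ} (hb : 0 ≤ b) (hba : b ≤ a) :
    a ^ n - b ^ n ≤ n * a ^ (n - 1) * (a - b) := by
  induction n with
  | zero => simp
  | succ m ih =>
    have ha : 0 ≤ a := hb.trans hba
    have h1 : a ^ (m + 1) - b ^ (m + 1) = a * (a ^ m - b ^ m) + (a - b) * b ^ m := by ring
    have h2 : a * (a ^ m - b ^ m) ≤ a * (m * a ^ (m - 1) * (a - b)) :=
      mul_le_mul_of_nonneg_left ih ha
    have h3 : a * (m * a ^ (m - 1) * (a - b)) ≤ m * a ^ m * (a - b) := by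
      rcases Nat.eq_zero_or_pos m with rfl | hm
      · simp
      · have : a * a ^ (m - 1) = a ^ m := by
          rw [← pow_succ']
          congr 1
          omega
        have e : a * (m * a ^ (m - 1) * (a - b)) = m * (a * a ^ (m - 1)) * (a - b) := by ring
        rw [e, this]
    have h4 : (a - b) * b ^ m ≤ a ^ m * (a - b) := by
      have : b ^ m ≤ a ^ m := pow_le_pow_left₀ hb hba m
      nlinarith [sub_nonneg.2 hba]
    calc a ^ (m + 1) - b ^ (m + 1) = a * (a ^ m - b ^ m) + (a - b) * b ^ m := h1
      _ ≤ m * a ^ m * (a - b) + a ^ m * (a - b) := add_le_add (h2.trans h3) h4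
      _ = (m + 1 : ℕ) * a ^ ((m + 1) - 1) * (a - b) := by push_cast; ring

variable {d : ℕ}

lemma aux_cube_eq (c : Fin d → ℝ) (u v : Fin d → ℝ) :
    {y : EuclideanSpace ℝ (Fin d) | ∀ l, y l ∈ Set.Ico (u l) (v l)}
      = (MeasurableEquiv.toLp 2 (Fin d → ℝ)).symm ⁻¹' (Set.univ.pi fun l => Set.Ico (u l) (v l)) := by
  ext y
  simp [Set.mem_pi]

lemma aux_cube_measurable (u v : Fin d → ℝ) :
    MeasurableSet {y : EuclideanSpace ℝ (Fin d) | ∀ l, y l ∈ Set.Ico (u l) (v l)} := by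
  rw [aux_cube_eq u u v]
  exact (MeasurableEquiv.toLp 2 (Fin d → ℝ)).symm.measurable
    (MeasurableSet.univ_pi fun l => measurableSet_Ico)

lemma aux_cube_volume (c : Fin d → ℝ) {ℓ : ℝ} (hℓ : 0 ≤ ℓ) :
    volume {y : EuclideanSpace ℝ (Fin d) | ∀ l, y l ∈ Set.Ico (c l) (c l + ℓ)}
      = ENNReal.ofReal (ℓ ^ d) := by
  rw [aux_cube_eq c c (fun l => c l + ℓ),
    (EuclideanSpace.volume_preserving_symm_measurableEquiv_toLp (Fin d)).measure_preimage
      ((MeasurableSet.univ_pi fun l => measurableSet_Ico).nullMeasurableSet)]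
  rw [volume_pi_pi]
  simp [Real.volume_Ico, ENNReal.ofReal_pow hℓ, Finset.prod_const]

lemma aux_coord_le (y : EuclideanSpace ℝ (Fin d)) (l : Fin d) : |y l| ≤ ‖y‖ := by
  rw [EuclideanSpace.norm_eq]
  have h1 : |y l| = Real.sqrt ((y l) ^ 2) := by
    rw [Real.sqrt_sq_eq_abs]
  rw [h1]
  apply Real.sqrt_le_sqrt
  have := Finset.single_le_sum (f := fun i => ‖y i‖ ^ 2)
    (fun i _ => by positivity) (Finset.mem_univ l)
  simpa [Real.norm_eq_abs, sq_abs] using this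

lemma aux_diam (c : Fin d → ℝ) {ℓ : ℝ} (hℓ : 0 ≤ ℓ) {y q : EuclideanSpace ℝ (Fin d)}
    (hy : ∀ l, y l ∈ Set.Ico (c l) (c l + ℓ)) (hq : ∀ l, q l ∈ Set.Ico (c l) (c l + ℓ)) :
    ‖y - q‖ ≤ Real.sqrt d * ℓ := by
  rw [EuclideanSpace.norm_eq]
  have key : ∀ l, ‖(y - q) l‖ ^ 2 ≤ ℓ ^ 2 := by
    intro l
    have h1 := hy l
    have h2 := hq l
    simp only [Set.mem_Ico] at h1 h2
    have : |(y - q) l| ≤ ℓ := by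
      have : (y - q) l = y l - q l := rfl
      rw [this, abs_le]
      constructor <;> nlinarith
    calc ‖(y - q) l‖ ^ 2 = |(y - q) l| ^ 2 := by rw [Real.norm_eq_abs]
      _ ≤ ℓ ^ 2 := by nlinarith [abs_nonneg ((y - q) l)]
  have hsum : (∑ l, ‖(y - q) l‖ ^ 2) ≤ d * ℓ ^ 2 := by
    calc (∑ l, ‖(y - q) l‖ ^ 2) ≤ ∑ _l : Fin d, ℓ ^ 2 := Finset.sum_le_sum (fun l _ => key l)
      _ = d * ℓ ^ 2 := by simp [Finset.sum_const, nsmul_eq_mul]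
  calc Real.sqrt (∑ l, ‖(y - q) l‖ ^ 2) ≤ Real.sqrt (d * ℓ ^ 2) := Real.sqrt_le_sqrt hsum
    _ = Real.sqrt d * ℓ := by
        rw [Real.sqrt_mul (by positivity), Real.sqrt_sq hℓ]

lemma aux_unit_ball_le :
    volume (Metric.ball (0 : EuclideanSpace ℝ (Fin d)) 1) ≤ ENNReal.ofReal (2 ^ d) := by
  have hsub : Metric.ball (0 : EuclideanSpace ℝ (Fin d)) 1
      ⊆ {y : EuclideanSpace ℝ (Fin d) | ∀ l, y l ∈ Set.Ico ((fun _ => (-1:ℝ)) l) ((fun _ => (-1:ℝ)) l + 2)} := by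
    intro y hy
    simp only [Metric.mem_ball, dist_zero_right] at hy
    intro l
    have := aux_coord_le y l
    have h := abs_le.mp (this.trans hy.le)
    show y l ∈ Set.Ico (-1 : ℝ) (-1 + 2)
    constructor
    · exact h.1
    · have : |y l| < 1 := lt_of_le_of_lt (aux_coord_le y l) hy
      have := (abs_lt.mp this).2
      linarith
  calc volume (Metric.ball (0 : EuclideanSpace ℝ (Fin d)) 1)
      ≤ volume {y : EuclideanSpace ℝ (Fin d) | ∀ l, y l ∈ Set.Ico ((fun _ => (-1:ℝ)) l) ((fun _ => (-1:ℝ)) l + 2)} := measure_mono hsub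
    _ = ENNReal.ofReal (2 ^ d) := aux_cube_volume _ (by norm_num)

lemma aux_ivt (c : Fin d → ℝ) {ℓ : ℝ} (x a bb : EuclideanSpace ℝ (Fin d)) {ε₁ ε₂ : ℝ}
    (ha : ∀ l, a l ∈ Set.Ico (c l) (c l + ℓ)) (hb : ∀ l, bb l ∈ Set.Ico (c l) (c l + ℓ))
    (haE : ε₁ ≤ ‖x - a‖ ∧ ‖x - a‖ ≤ ε₂)
    (hbE : ¬(ε₁ ≤ ‖x - bb‖ ∧ ‖x - bb‖ ≤ ε₂)) :
    ∃ q : EuclideanSpace ℝ (Fin d), (∀ l, q l ∈ Set.Ico (c l) (c l + ℓ)) ∧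
      (‖x - q‖ = ε₁ ∨ ‖x - q‖ = ε₂) := by
  set f : ℝ → ℝ := fun t => ‖x - (bb + t • (a - bb))‖ with hf
  have hcont : Continuous f :=
    (continuous_const.sub (continuous_const.add (continuous_id.smul continuous_const))).norm
  have hmem : ∀ t ∈ Set.Icc (0:ℝ) 1, ∀ l, (bb + t • (a - bb)) l ∈ Set.Ico (c l) (c l + ℓ) := by
    intro t ht l
    have h1 : (bb + t • (a - bb)) l = (1 - t) * bb l + t * a l := by
      have : (bb + t • (a - bb)) l = bb l + t * (a l - bb l) := rfl
      rw [this]; ring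
    rw [h1]
    exact (convex_Ico (c l) (c l + ℓ)) (hb l) (ha l) (by linarith [ht.2]) ht.1 (by ring)
  have hf0 : f 0 = ‖x - bb‖ := by simp [hf]
  have hf1 : f 1 = ‖x - a‖ := by simp [hf]
  push_neg at hbE
  rcases le_or_gt ε₁ ‖x - bb‖ with hc | hc
  · -- then ε₂ < ‖x - bb‖, find point with norm ε₂ between t=1 and t=0
    have hgt : ε₂ < ‖x - bb‖ := hbE hc
    have hsub : Set.Icc (f 1) (f 0) ⊆ f '' Set.Icc 0 1 :=
      intermediate_value_Icc' (by norm_num) hcont.continuousOn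
    have : ε₂ ∈ Set.Icc (f 1) (f 0) := by rw [hf0, hf1]; exact ⟨haE.2, hgt.le⟩
    obtain ⟨t, ht, hft⟩ := hsub this
    exact ⟨bb + t • (a - bb), hmem t ht, Or.inr hft⟩
  · have hsub : Set.Icc (f 0) (f 1) ⊆ f '' Set.Icc 0 1 :=
      intermediate_value_Icc (by norm_num) hcont.continuousOn
    have : ε₁ ∈ Set.Icc (f 0) (f 1) := by rw [hf0, hf1]; exact ⟨hc.le, haE.1⟩
    obtain ⟨t, ht, hft⟩ := hsub this
    exact ⟨bb + t • (a - bb), hmem t ht, Or.inl hft⟩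

/-- The counting bound: any finset of "boundary" cubes has few elements. -/
lemma aux_count (hd : 1 ≤ d) (k : ℤ) (s : ℕ) {ι : Type} (c : ι → Fin d → ℝ)
    (Q : ι → Set (EuclideanSpace ℝ (Fin d)))
    (hQ : ∀ i, Q i = {y | ∀ l, y l ∈ Set.Ico (c i l) (c i l + (2 : ℝ) ^ (k - s))})
    (hdisj : Pairwise (Function.onFun Disjoint Q))
    (x : EuclideanSpace ℝ (Fin d)) (ε₁ ε₂ : ℝ)
    (hε₁ : (2 : ℝ) ^ (k - 1) ≤ ε₁) (hε : ε₁ < ε₂) (hε₂ : ε₂ ≤ (2 : ℝ) ^ k)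
    (F : Finset ι)
    (hF : ∀ i ∈ F,
      (((x - ·) '' Q i) ∩ {y : EuclideanSpace ℝ (Fin d) | ε₁ ≤ ‖y‖ ∧ ‖y‖ ≤ ε₂}).Nonempty ∧
      (((x - ·) '' Q i) ∩ {y : EuclideanSpace ℝ (Fin d) | ε₁ ≤ ‖y‖ ∧ ‖y‖ ≤ ε₂}ᶜ).Nonempty) :
    (F.card : ℝ) ≤ (2 ^ (d + 2) * d * Real.sqrt d * (1 + Real.sqrt d) ^ (d - 1))
      * (2 : ℝ) ^ ((d - 1) * s : ℕ) := by
  set ℓ : ℝ := (2 : ℝ) ^ (k - (s : ℤ)) with hℓdef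
  have hℓ : 0 < ℓ := zpow_pos (by norm_num) _
  have hsd : (1 : ℝ) ≤ Real.sqrt d := by
    rw [show (1:ℝ) = Real.sqrt 1 by simp]
    exact Real.sqrt_le_sqrt (by exact_mod_cast hd)
  set D : ℝ := Real.sqrt d * ℓ with hDdef
  have hD : 0 < D := mul_pos (by linarith) hℓ
  have hε₁pos : 0 < ε₁ := lt_of_lt_of_le (zpow_pos (by norm_num) _) hε₁
  have hε₂pos : 0 < ε₂ := hε₁pos.trans hε
  have hℓle : ℓ ≤ (2:ℝ) ^ k := zpow_le_zpow_right₀ one_le_two (by omega)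
  -- each cube in F is contained in one of two thin annuli
  set r₁ : ℝ := max (ε₁ - D) 0 with hr₁def
  set r₂ : ℝ := max (ε₂ - D) 0 with hr₂def
  set A₁ : Set (EuclideanSpace ℝ (Fin d)) :=
    Metric.closedBall x (ε₁ + D) \ Metric.ball x r₁ with hA₁def
  set A₂ : Set (EuclideanSpace ℝ (Fin d)) :=
    Metric.closedBall x (ε₂ + D) \ Metric.ball x r₂ with hA₂def
  have hQsub : ∀ i ∈ F, Q i ⊆ A₁ ∪ A₂ := by
    intro i hi
    obtain ⟨hne1, hne2⟩ := hF i hi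
    obtain ⟨z1, ⟨a, haQ, rfl⟩, hz1⟩ := hne1
    obtain ⟨z2, ⟨bb, hbQ, rfl⟩, hz2⟩ := hne2
    rw [hQ i] at haQ hbQ
    simp only [Set.mem_setOf_eq] at haQ hbQ hz1 hz2
    have hz2' : ¬(ε₁ ≤ ‖x - bb‖ ∧ ‖x - bb‖ ≤ ε₂) := by
      intro h; exact hz2 h
    obtain ⟨q, hqQ, hqnorm⟩ := aux_ivt (c i) x a bb haQ hbQ hz1 hz2'
    intro y hy
    rw [hQ i] at hy
    simp only [Set.mem_setOf_eq] at hy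
    have hyd : ‖y - q‖ ≤ D := aux_diam (c i) hℓ.le hy hqQ
    have hqy : ‖q - y‖ ≤ D := (norm_sub_rev q y).le.trans hyd
    have hxy : ‖x - y‖ ≤ ‖x - q‖ + D := by
      calc ‖x - y‖ = ‖(x - q) + (q - y)‖ := by rw [sub_add_sub_cancel]
        _ ≤ ‖x - q‖ + ‖q - y‖ := norm_add_le _ _
        _ ≤ ‖x - q‖ + D := by linarith
    have hxy2 : ‖x - q‖ - D ≤ ‖x - y‖ := by
      have : ‖x - q‖ ≤ ‖x - y‖ + ‖y - q‖ := by
        calc ‖x - q‖ = ‖(x - y) + (y - q)‖ := by rw [sub_add_sub_cancel]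
          _ ≤ ‖x - y‖ + ‖y - q‖ := norm_add_le _ _
      linarith
    have hdist : dist y x = ‖x - y‖ := by rw [dist_eq_norm, norm_sub_rev]
    rcases hqnorm with h | h
    · left
      constructor
      · simp only [Metric.mem_closedBall, hdist]; rw [h] at hxy; linarith
      · simp only [Metric.mem_ball, hdist, not_lt]
        rw [h] at hxy2
        exact max_le (by linarith) (norm_nonneg _)
    · right
      constructor
      · simp only [Metric.mem_closedBall, hdist]; rw [h] at hxy; linarith
      · simp only [Metric.mem_ball, hdist, not_lt]
        rw [h] at hxy2
        exact max_le (by linarith) (norm_nonneg _)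
  -- volume of the annuli
  haveI : Nontrivial (EuclideanSpace ℝ (Fin d)) := by
    apply Module.nontrivial_of_finrank_pos (R := ℝ)
    rw [finrank_euclideanSpace_fin]; omega
  set κ : ENNReal := volume (Metric.ball (0 : EuclideanSpace ℝ (Fin d)) 1) with hκdef
  set Δmax : ℝ := d * ((1 + Real.sqrt d) * 2 ^ k) ^ (d - 1) * (2 * D) with hΔdef
  have hΔpos : 0 ≤ Δmax := by positivity
  have hvolA : ∀ (ε : ℝ), 0 < ε → ε ≤ (2:ℝ)^k →
      volume (Metric.closedBall x (ε + D) \ Metric.ball x (max (ε - D) 0))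
        ≤ ENNReal.ofReal Δmax * κ := by
    intro ε hεpos hεle
    set r : ℝ := max (ε - D) 0 with hrdef
    have hr0 : 0 ≤ r := le_max_right _ _
    have hrle : r ≤ ε + D := by
      apply max_le <;> [linarith; positivity]
    have heD : 0 ≤ ε + D := by positivity
    have hsub : Metric.ball x r ⊆ Metric.closedBall x (ε + D) :=
      (Metric.ball_subset_ball hrle).trans Metric.ball_subset_closedBall
    rw [measure_diff hsub measurableSet_ball.nullMeasurableSet measure_ball_lt_top.ne]
    rw [Measure.addHaar_closedBall volume x heD, Measure.addHaar_ball volume x hr0,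
      finrank_euclideanSpace_fin]
    -- now: ofReal((ε+D)^d) * κ - ofReal(r^d) * κ ≤ ofReal Δmax * κ
    have hΔ : (ε + D) ^ d - r ^ d ≤ Δmax := by
      have h1 : (ε + D) ^ d - r ^ d ≤ d * (ε + D) ^ (d - 1) * ((ε + D) - r) :=
        aux_pow_sub_pow d hr0 hrle
      have h2 : (ε + D) - r ≤ 2 * D := by
        rcases le_total (ε - D) 0 with h0 | h0
        · rw [hrdef, max_eq_right h0]; linarith
        · rw [hrdef, max_eq_left h0]; linarith
      have h3 : (ε + D) ^ (d - 1) ≤ ((1 + Real.sqrt d) * 2 ^ k) ^ (d - 1) := by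
        apply pow_le_pow_left₀ heD
        have : D ≤ Real.sqrt d * 2 ^ k := by
          rw [hDdef]
          exact mul_le_mul_of_nonneg_left hℓle (by linarith)
        calc ε + D ≤ 2 ^ k + Real.sqrt d * 2 ^ k := by linarith
          _ = (1 + Real.sqrt d) * 2 ^ k := by ring
      calc (ε + D) ^ d - r ^ d ≤ d * (ε + D) ^ (d - 1) * ((ε + D) - r) := h1
        _ ≤ d * ((1 + Real.sqrt d) * 2 ^ k) ^ (d - 1) * (2 * D) := by
            apply mul_le_mul
            · exact mul_le_mul_of_nonneg_left h3 (by positivity)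
            · exact h2
            · have : 0 ≤ (ε + D) - r := by linarith
              linarith
            · positivity
    rw [tsub_le_iff_right]
    calc ENNReal.ofReal ((ε + D) ^ d) * κ
        ≤ ENNReal.ofReal (Δmax + r ^ d) * κ :=
          mul_le_mul_left (ENNReal.ofReal_le_ofReal (by linarith)) κ
      _ = ENNReal.ofReal Δmax * κ + ENNReal.ofReal (r ^ d) * κ := by
          rw [ENNReal.ofReal_add hΔpos (by positivity)]; ring
  -- combine
  have hcube_meas : ∀ i : ι, MeasurableSet (Q i) := by
    intro i; rw [hQ i]; exact aux_cube_measurable _ _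
  have hvol : ∀ i, volume (Q i) = ENNReal.ofReal (ℓ ^ d) := by
    intro i; rw [hQ i]; exact aux_cube_volume _ hℓ.le
  have hsum : (F.card : ENNReal) * ENNReal.ofReal (ℓ ^ d)
      ≤ ENNReal.ofReal (2 * Δmax * 2 ^ d) := by
    have h1 : volume (⋃ i ∈ F, Q i) = ∑ i ∈ F, volume (Q i) :=
      measure_biUnion_finset (fun i _ j _ hij => hdisj hij) (fun i _ => hcube_meas i)
    have h2 : volume (⋃ i ∈ F, Q i) ≤ volume A₁ + volume A₂ := by
      refine le_trans (measure_mono ?_) (measure_union_le _ _)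
      exact Set.iUnion₂_subset hQsub
    have h3 : volume A₁ ≤ ENNReal.ofReal Δmax * κ := hvolA ε₁ hε₁pos (by linarith)
    have h4 : volume A₂ ≤ ENNReal.ofReal Δmax * κ := hvolA ε₂ hε₂pos hε₂
    have h5 : ENNReal.ofReal Δmax * κ ≤ ENNReal.ofReal Δmax * ENNReal.ofReal (2 ^ d) :=
      mul_le_mul_right aux_unit_ball_le _
    calc (F.card : ENNReal) * ENNReal.ofReal (ℓ ^ d)
        = ∑ _i ∈ F, ENNReal.ofReal (ℓ ^ d) := by
          rw [Finset.sum_const, nsmul_eq_mul]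
      _ = ∑ i ∈ F, volume (Q i) := by
          exact (Finset.sum_congr rfl fun i _ => (hvol i).symm).symm ▸ rfl
      _ = volume (⋃ i ∈ F, Q i) := h1.symm
      _ ≤ volume A₁ + volume A₂ := h2
      _ ≤ ENNReal.ofReal Δmax * ENNReal.ofReal (2 ^ d)
          + ENNReal.ofReal Δmax * ENNReal.ofReal (2 ^ d) :=
          add_le_add (h3.trans h5) (h4.trans h5)
      _ = ENNReal.ofReal (2 * Δmax * 2 ^ d) := by
          rw [← two_mul, ← ENNReal.ofReal_mul hΔpos,
            show (2 : ENNReal) = ENNReal.ofReal 2 by norm_num,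
            ← ENNReal.ofReal_mul (by norm_num : (0:ℝ) ≤ 2)]
          congr 1; ring
  have hreal : (F.card : ℝ) * ℓ ^ d ≤ 2 * Δmax * 2 ^ d := by
    rw [show ((F.card : ENNReal)) = ENNReal.ofReal (F.card : ℝ) by simp,
      ← ENNReal.ofReal_mul (by positivity)] at hsum
    exact (ENNReal.ofReal_le_ofReal_iff
      (mul_nonneg (mul_nonneg (by norm_num) hΔpos) (by positivity))).mp hsum
  have hpow : ((2:ℝ) ^ k) ^ (d - 1) * ℓ = (2:ℝ) ^ ((d - 1) * s : ℕ) * ℓ ^ d := by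
    rw [hℓdef, ← zpow_natCast ((2:ℝ) ^ k) (d - 1), ← zpow_mul,
      ← zpow_natCast ((2:ℝ) ^ (k - (s:ℤ))) d, ← zpow_mul,
      ← zpow_natCast (2:ℝ) ((d - 1) * s), ← zpow_add₀ (two_ne_zero),
      ← zpow_add₀ (two_ne_zero)]
    congr 1
    push_cast [Nat.cast_sub hd]
    ring
  have heq : 2 * Δmax * 2 ^ d
      = (2 ^ (d + 2) * d * Real.sqrt d * (1 + Real.sqrt d) ^ (d - 1))
        * (2:ℝ) ^ ((d - 1) * s : ℕ) * ℓ ^ d := by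
    have e1 : 2 * Δmax * 2 ^ d
        = (2 ^ (d + 2) * d * Real.sqrt d * (1 + Real.sqrt d) ^ (d - 1))
          * (((2:ℝ) ^ k) ^ (d - 1) * ℓ) := by
      rw [hΔdef, hDdef, mul_pow (1 + Real.sqrt d) ((2:ℝ) ^ k) (d - 1)]
      ring
    rw [e1, hpow]
    ring
  have hfin : (F.card : ℝ) * ℓ ^ d
      ≤ ((2 ^ (d + 2) * d * Real.sqrt d * (1 + Real.sqrt d) ^ (d - 1))
        * (2:ℝ) ^ ((d - 1) * s : ℕ)) * ℓ ^ d := by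
    exact hreal.trans_eq heq
  exact le_of_mul_le_mul_right hfin (pow_pos hℓ d)

/-- Single-scale bound for the contribution of the boundary cubes: if `‖H‖_∞ ≤ M 2^{δ₀ s} 2^{-kd}`
with `H` supported in `{2^{k-2} ≤ |y| ≤ 2^k}`, the cubes `Q` are pairwise disjoint of side
`2^{k-s}` with `‖b_Q‖₁ ≤ α|Q|`, and `B_bd` collects the `b_Q` whose reflected translate `x - Q`
meets both the annulus `E = {ε₁ ≤ |y| ≤ ε₂}` and its complement, then
`|(H χ_E) * B_bd (x)| ≤ C M α 2^{-(1-δ₀)s}`. -/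
theorem boundary_cubes_bound (d : ℕ) (hd : 1 ≤ d) :
    ∃ C : ℝ, 0 < C ∧
      ∀ (M α δ₀ : ℝ), 0 ≤ M → 0 ≤ α → 0 < δ₀ →
      ∀ (k : ℤ) (s : ℕ)
        (H : EuclideanSpace ℝ (Fin d) → ℝ), Measurable H →
        (∀ y, |H y| ≤ M * (2 : ℝ) ^ (δ₀ * s) * ((2 : ℝ) ^ (k * d))⁻¹) →
        (Function.support H ⊆ {y | (2 : ℝ) ^ (k - 2) ≤ ‖y‖ ∧ ‖y‖ ≤ (2 : ℝ) ^ k}) →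
      ∀ (ι : Type) (_ : Countable ι) (c : ι → Fin d → ℝ)
        (Q : ι → Set (EuclideanSpace ℝ (Fin d))),
        (∀ i, Q i = {y | ∀ l, y l ∈ Set.Ico (c i l) (c i l + (2 : ℝ) ^ (k - s))}) →
        Pairwise (Function.onFun Disjoint Q) →
      ∀ (b : ι → EuclideanSpace ℝ (Fin d) → ℝ),
        (∀ i, Integrable (b i)) →
        (∀ i, Function.support (b i) ⊆ Q i) →
        (∀ i, ∫ y, |b i y| ≤ α * (2 : ℝ) ^ ((k - s) * d)) →
      ∀ (x : EuclideanSpace ℝ (Fin d)) (ε₁ ε₂ : ℝ),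
        (2 : ℝ) ^ (k - 1) ≤ ε₁ → ε₁ < ε₂ → ε₂ ≤ (2 : ℝ) ^ k →
        |∫ y in {y : EuclideanSpace ℝ (Fin d) | ε₁ ≤ ‖y‖ ∧ ‖y‖ ≤ ε₂},
            H y * ∑' i : {i : ι |
                (((x - ·) '' Q i) ∩ {y : EuclideanSpace ℝ (Fin d) | ε₁ ≤ ‖y‖ ∧ ‖y‖ ≤ ε₂}).Nonempty ∧
                (((x - ·) '' Q i) ∩ {y : EuclideanSpace ℝ (Fin d) | ε₁ ≤ ‖y‖ ∧ ‖y‖ ≤ ε₂}ᶜ).Nonempty},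
              b i (x - y)|
          ≤ C * M * α * (2 : ℝ) ^ (-(1 - δ₀) * s) := by
  have hdR : (0:ℝ) < d := by exact_mod_cast hd
  have hsd : (0:ℝ) < Real.sqrt d := Real.sqrt_pos.mpr hdR
  set C₁ : ℝ := 2 ^ (d + 2) * d * Real.sqrt d * (1 + Real.sqrt d) ^ (d - 1) with hC₁
  have hC₁pos : 0 < C₁ := by positivity
  refine ⟨C₁, hC₁pos, ?_⟩
  intro M α δ₀ hM hα hδ₀ k s H hHmeas hHbound hHsupp ι hι c Q hQ hdisj b hbint hbsupp hbL1
    x ε₁ ε₂ hε₁ hε hε₂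
  set E : Set (EuclideanSpace ℝ (Fin d)) := {y | ε₁ ≤ ‖y‖ ∧ ‖y‖ ≤ ε₂} with hE
  set P : ι → Prop := fun i =>
    (((x - ·) '' Q i) ∩ E).Nonempty ∧ (((x - ·) '' Q i) ∩ Eᶜ).Nonempty with hP
  set N : ℝ := C₁ * 2 ^ ((d - 1) * s : ℕ) with hN
  have hNnn : 0 ≤ N := by positivity
  have hcount : ∀ F : Finset ι, (∀ i ∈ F, P i) → (F.card : ℝ) ≤ N := fun F hF =>
    aux_count hd k s c Q hQ hdisj x ε₁ ε₂ hε₁ hε hε₂ F hF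
  have hSfin : {i | P i}.Finite := by
    by_contra hinf
    obtain ⟨F, hFsub, hFcard⟩ :=
      (show Set.Infinite {i | P i} from hinf).exists_subset_card_eq (⌈N⌉₊ + 1)
    have h1 : (F.card : ℝ) ≤ N := hcount F (fun i hi => hFsub hi)
    rw [hFcard] at h1
    have h2 := Nat.le_ceil N
    push_cast at h1
    linarith
  haveI := hSfin.fintype
  set F₀ : Finset ι := hSfin.toFinset with hF₀
  have hF₀mem : ∀ i, i ∈ F₀ ↔ P i := fun i => hSfin.mem_toFinset
  have hcard : (F₀.card : ℝ) ≤ N := hcount F₀ (fun i hi => (hF₀mem i).mp hi)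
  set M' : ℝ := M * (2 : ℝ) ^ (δ₀ * s) * ((2 : ℝ) ^ (k * d))⁻¹ with hM'
  have hM'nn : 0 ≤ M' :=
    mul_nonneg (mul_nonneg hM (Real.rpow_nonneg (by norm_num) _))
      (inv_nonneg.mpr (zpow_nonneg (by norm_num) _))
  have hptwise : ∀ y, H y * (∑' i : {i : ι | P i}, b i (x - y))
      = ∑ i ∈ F₀, H y * b i (x - y) := by
    intro y
    rw [tsum_fintype, Finset.mul_sum]
    exact (Finset.sum_subtype F₀ (fun i => hF₀mem i) (fun i => H y * b i (x - y))).symm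
  have hbi : ∀ i, Integrable (fun y => b i (x - y)) volume := fun i =>
    (hbint i).comp_sub_left x
  have hgint : ∀ i, Integrable (fun y => H y * b i (x - y)) volume := fun i =>
    (hbi i).bdd_mul hHmeas.aestronglyMeasurable
      (ae_of_all _ fun y => by rw [Real.norm_eq_abs]; exact hHbound y)
  have hsplit : (∫ y in E, H y * ∑' i : {i : ι | P i}, b i (x - y))
      = ∑ i ∈ F₀, ∫ y in E, H y * b i (x - y) := by
    calc (∫ y in E, H y * ∑' i : {i : ι | P i}, b i (x - y))
        = ∫ y in E, ∑ i ∈ F₀, H y * b i (x - y) := by simp_rw [hptwise]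
      _ = ∑ i ∈ F₀, ∫ y in E, H y * b i (x - y) :=
          integral_finset_sum F₀ (fun i _ => (hgint i).integrableOn)
  have hone : ∀ i, |∫ y in E, H y * b i (x - y)| ≤ M' * (α * (2 : ℝ) ^ ((k - s) * d)) := by
    intro i
    have habs : |∫ y in E, H y * b i (x - y)| ≤ ∫ y in E, |H y * b i (x - y)| := by
      rw [← Real.norm_eq_abs]
      refine (norm_integral_le_integral_norm _).trans (le_of_eq ?_)
      simp only [Real.norm_eq_abs]
    have hmono : (∫ y in E, |H y * b i (x - y)|) ≤ ∫ y in E, M' * |b i (x - y)| := by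
      refine integral_mono ((hgint i).abs.integrableOn) (((hbi i).abs.const_mul M').integrableOn) ?_
      intro y
      show |H y * b i (x - y)| ≤ M' * |b i (x - y)|
      rw [abs_mul]
      exact mul_le_mul_of_nonneg_right (hHbound y) (abs_nonneg _)
    have hconst : (∫ y in E, M' * |b i (x - y)|) = M' * ∫ y in E, |b i (x - y)| :=
      integral_const_mul M' _
    have hfull : (∫ y in E, |b i (x - y)|) ≤ ∫ y, |b i (x - y)| :=
      setIntegral_le_integral (hbi i).abs (ae_of_all _ fun y => abs_nonneg _)
    have hchange : (∫ y, |b i (x - y)|) = ∫ y, |b i y| :=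
      integral_sub_left_eq_self (fun y => |b i y|) volume x
    calc |∫ y in E, H y * b i (x - y)| ≤ ∫ y in E, |H y * b i (x - y)| := habs
      _ ≤ ∫ y in E, M' * |b i (x - y)| := hmono
      _ = M' * ∫ y in E, |b i (x - y)| := hconst
      _ ≤ M' * (α * (2 : ℝ) ^ ((k - s) * d)) := by
          refine mul_le_mul_of_nonneg_left ?_ hM'nn
          calc (∫ y in E, |b i (x - y)|) ≤ ∫ y, |b i (x - y)| := hfull
            _ = ∫ y, |b i y| := hchange
            _ ≤ α * (2 : ℝ) ^ ((k - s) * d) := hbL1 i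
  have hz : (2 : ℝ) ^ ((d - 1) * s : ℕ) * ((2 : ℝ) ^ (k * d))⁻¹ * (2 : ℝ) ^ ((k - s) * d)
      = (2 : ℝ) ^ (-(s : ℤ)) := by
    rw [← zpow_natCast (2:ℝ) ((d - 1) * s), ← zpow_neg, ← zpow_add₀ (two_ne_zero),
      ← zpow_add₀ (two_ne_zero)]
    congr 1
    push_cast [Nat.cast_sub hd]
    ring
  have hr : (2 : ℝ) ^ (-(s : ℤ)) * (2 : ℝ) ^ (δ₀ * s) = (2 : ℝ) ^ (-(1 - δ₀) * s) := by
    rw [← Real.rpow_intCast 2 (-(s : ℤ)), ← Real.rpow_add (by norm_num)]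
    congr 1
    push_cast
    ring
  calc |∫ y in E, H y * ∑' i : {i : ι | P i}, b i (x - y)|
      = |∑ i ∈ F₀, ∫ y in E, H y * b i (x - y)| := by rw [hsplit]
    _ ≤ ∑ i ∈ F₀, |∫ y in E, H y * b i (x - y)| := Finset.abs_sum_le_sum_abs _ _
    _ ≤ ∑ _i ∈ F₀, M' * (α * (2 : ℝ) ^ ((k - s) * d)) := Finset.sum_le_sum (fun i _ => hone i)
    _ = (F₀.card : ℝ) * (M' * (α * (2 : ℝ) ^ ((k - s) * d))) := by
        rw [Finset.sum_const, nsmul_eq_mul]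
    _ ≤ N * (M' * (α * (2 : ℝ) ^ ((k - s) * d))) := by
        refine mul_le_mul_of_nonneg_right hcard ?_
        exact mul_nonneg hM'nn (mul_nonneg hα (zpow_nonneg (by norm_num) _))
    _ = C₁ * M * α * ((2 : ℝ) ^ ((d - 1) * s : ℕ) * ((2 : ℝ) ^ (k * d))⁻¹
        * (2 : ℝ) ^ ((k - s) * d) * (2 : ℝ) ^ (δ₀ * s)) := by
        rw [hN, hM']; ring
    _ = C₁ * M * α * (2 : ℝ) ^ (-(1 - δ₀) * s) := by rw [hz, hr]
end
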